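/- In the quadratic quasi-Newton scheme, for all k ≥ 0 one has A ⪯ G_k ⪯ (L/μ)·A and λ_k ≤ (1 − μ/L)^k · λ_0. -/

import Mathlib

open Matrix Finset

/-- The Broyden family update of a Hessian approximation `G` with respect to
the target matrix `A` along direction `u`, parameterized by `τ`. -/
noncomputable def broyd {n : ℕ} (τ : ℝ) (A G : Matrix (Fin n) (Fin n) ℝ) (u : Fin n → ℝ) :
    Matrix (Fin n) (Fin n) ℝ :=
  if u = 0 then G
  else
    let aUU : ℝ := u ⬝ᵥ A.mulVec u
    let gUU : ℝ := u ⬝ᵥ G.mulVec u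
    let agaUU : ℝ := u ⬝ᵥ (A * G⁻¹ * A).mulVec u
    let ρ : ℝ := gUU / aUU
    let φ : ℝ := τ * (aUU / agaUU) / (τ * (aUU / agaUU) + (1 - τ) * ρ)
    φ • (G - aUU⁻¹ • (A * vecMulVec u u * G + G * vecMulVec u u * A)
          + ((ρ + 1) / aUU) • (A * vecMulVec u u * A)) +
    (1 - φ) • (G - gUU⁻¹ • (G * vecMulVec u u * G) + aUU⁻¹ • (A * vecMulVec u u * A))

/-- `psdLE P Q` (i.e. `P ⪯ Q`) : the matrix `Q - P` is positive semidefinite. -/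
def psdLE {n : ℕ} (P Q : Matrix (Fin n) (Fin n) ℝ) : Prop := (Q - P).PosSemidef

/-- The closeness measure ν(A, G, u). -/
noncomputable def nuMeas {n : ℕ} (A G : Matrix (Fin n) (Fin n) ℝ) (u : Fin n → ℝ) : ℝ :=
  Real.sqrt ((u ⬝ᵥ ((G - A) * G⁻¹ * (G - A)).mulVec u) / (u ⬝ᵥ A.mulVec u))

/-- The log-det barrier V(A, G) = ln det (A⁻¹ G). -/
noncomputable def logDetBarrier {n : ℕ} (A G : Matrix (Fin n) (Fin n) ℝ) : ℝ :=
  Real.log (A⁻¹ * G).det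

/-- The augmented log-det barrier ψ(G, A) = ln det (A⁻¹ G) - tr (G⁻¹ (G - A)). -/
noncomputable def psiBarrier {n : ℕ} (G A : Matrix (Fin n) (Fin n) ℝ) : ℝ :=
  Real.log (A⁻¹ * G).det - (G⁻¹ * (G - A)).trace

/-! The matrices stay sandwiched, `A ⪯ G_k ⪯ η A` with `η = L / μ`: this holds for `G₀ = L B`,
and a Broyden update is a convex combination of the DFP and BFGS updates, whose quadratic forms
are `⟨G (x - t u), x - t u⟩ + ⟨A u, x⟩² / ⟨A u, u⟩` for suitable `t` (for BFGS, the minimising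
one). Comparing `G` with `A` and `η A` on the line `x - t u` and minimising the `A`-form over `t`
keeps the form between `⟨A x, x⟩` and `η ⟨A x, x⟩`.

Given the sandwich, a step maps the gradient `g` to `A (A⁻¹ - G⁻¹) g`, and
`0 ⪯ A⁻¹ - G⁻¹ ⪯ (1 - η⁻¹) A⁻¹` because inversion reverses `⪯`; Cauchy–Schwarz for the form of
`A⁻¹ - G⁻¹` then contracts `λ` by the factor `1 - μ / L`. -/

namespace Matrix

variable {ι : Type*} [Fintype ι]

lemma IsHermitian.dotProduct_mulVec_comm {M : Matrix ι ι ℝ} (hM : M.IsHermitian) (x y : ι → ℝ) :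
    x ⬝ᵥ M *ᵥ y = y ⬝ᵥ M *ᵥ x := by
  rw [dotProduct_mulVec, ← mulVec_transpose, ← conjTranspose_eq_transpose_of_trivial, hM.eq,
    dotProduct_comm]

lemma IsHermitian.dotProduct_mulVec_sub_smul {M : Matrix ι ι ℝ} (hM : M.IsHermitian)
    (x u : ι → ℝ) (t : ℝ) :
    (x - t • u) ⬝ᵥ M *ᵥ (x - t • u) =
      x ⬝ᵥ M *ᵥ x - 2 * t * (x ⬝ᵥ M *ᵥ u) + t ^ 2 * (u ⬝ᵥ M *ᵥ u) := by
  simp only [mulVec_sub, mulVec_smul, sub_dotProduct, dotProduct_sub, smul_dotProduct,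
    dotProduct_smul, smul_eq_mul, hM.dotProduct_mulVec_comm u x]
  ring

lemma IsHermitian.sub_div_le_dotProduct_mulVec_sub_smul {M : Matrix ι ι ℝ}
    (hM : M.IsHermitian) {u : ι → ℝ} (hu : 0 < u ⬝ᵥ M *ᵥ u) (x : ι → ℝ) (t : ℝ) :
    x ⬝ᵥ M *ᵥ x - (x ⬝ᵥ M *ᵥ u) ^ 2 / (u ⬝ᵥ M *ᵥ u) ≤ (x - t • u) ⬝ᵥ M *ᵥ (x - t • u) := by
  rw [hM.dotProduct_mulVec_sub_smul, ← sub_nonneg]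
  have hsquare : x ⬝ᵥ M *ᵥ x - 2 * t * (x ⬝ᵥ M *ᵥ u) + t ^ 2 * (u ⬝ᵥ M *ᵥ u) -
      (x ⬝ᵥ M *ᵥ x - (x ⬝ᵥ M *ᵥ u) ^ 2 / (u ⬝ᵥ M *ᵥ u)) =
      (t * (u ⬝ᵥ M *ᵥ u) - x ⬝ᵥ M *ᵥ u) ^ 2 / (u ⬝ᵥ M *ᵥ u) := by
    field_simp
    ring
  rw [hsquare]
  positivity

lemma IsHermitian.dotProduct_mulVec_sub_div_smul {M : Matrix ι ι ℝ} (hM : M.IsHermitian)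
    {u : ι → ℝ} (hu : u ⬝ᵥ M *ᵥ u ≠ 0) (x : ι → ℝ) :
    (x - ((x ⬝ᵥ M *ᵥ u) / (u ⬝ᵥ M *ᵥ u)) • u) ⬝ᵥ M *ᵥ (x - ((x ⬝ᵥ M *ᵥ u) / (u ⬝ᵥ M *ᵥ u)) • u) =
      x ⬝ᵥ M *ᵥ x - (x ⬝ᵥ M *ᵥ u) ^ 2 / (u ⬝ᵥ M *ᵥ u) := by
  rw [hM.dotProduct_mulVec_sub_smul]
  field_simp
  ring

lemma PosSemidef.dotProduct_mulVec_sq_le {K : Matrix ι ι ℝ} (hK : K.PosSemidef) (x y : ι → ℝ) :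
    (x ⬝ᵥ K *ᵥ y) ^ 2 ≤ (x ⬝ᵥ K *ᵥ x) * (y ⬝ᵥ K *ᵥ y) := by
  have hdiscr : discrim (y ⬝ᵥ K *ᵥ y) (-2 * (x ⬝ᵥ K *ᵥ y)) (x ⬝ᵥ K *ᵥ x) ≤ 0 :=
    discrim_le_zero fun t ↦ by
      have := hK.dotProduct_mulVec_nonneg (x - t • y)
      rw [star_trivial, hK.isHermitian.dotProduct_mulVec_sub_smul] at this
      linear_combination this
  rw [discrim] at hdiscr
  linarith

lemma PosDef.mulVec_inv_mulVec [DecidableEq ι] {P : Matrix ι ι ℝ} (hP : P.PosDef) (y : ι → ℝ) :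
    P *ᵥ (P⁻¹ *ᵥ y) = y := by
  rw [mulVec_mulVec, mul_nonsing_inv _ (isUnit_iff_ne_zero.mpr hP.det_pos.ne'), one_mulVec]

/-- With the next lemma: `y ⬝ᵥ P⁻¹ *ᵥ y = max_x (2 x ⬝ᵥ y - x ⬝ᵥ P *ᵥ x)`, attained at
`x = P⁻¹ *ᵥ y`. -/
lemma PosDef.two_mul_dotProduct_sub_le [DecidableEq ι] {P : Matrix ι ι ℝ} (hP : P.PosDef)
    (x y : ι → ℝ) : 2 * (x ⬝ᵥ y) - x ⬝ᵥ P *ᵥ x ≤ y ⬝ᵥ P⁻¹ *ᵥ y := by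
  have hsq := hP.posSemidef.dotProduct_mulVec_nonneg (x - P⁻¹ *ᵥ y)
  rw [star_trivial, mulVec_sub, hP.mulVec_inv_mulVec y, sub_dotProduct, dotProduct_sub,
    dotProduct_sub, hP.isHermitian.dotProduct_mulVec_comm (P⁻¹ *ᵥ y) x,
    hP.mulVec_inv_mulVec y] at hsq
  linarith [dotProduct_comm x y, dotProduct_comm (P⁻¹ *ᵥ y) y]

lemma PosDef.two_mul_dotProduct_inv_mulVec_sub [DecidableEq ι] {P : Matrix ι ι ℝ}
    (hP : P.PosDef) (y : ι → ℝ) :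
    2 * ((P⁻¹ *ᵥ y) ⬝ᵥ y) - (P⁻¹ *ᵥ y) ⬝ᵥ P *ᵥ (P⁻¹ *ᵥ y) = y ⬝ᵥ P⁻¹ *ᵥ y := by
  rw [hP.mulVec_inv_mulVec, dotProduct_comm]
  ring

end Matrix

namespace psdLE

variable {n : ℕ} {P Q : Matrix (Fin n) (Fin n) ℝ}

lemma dotProduct_mulVec_le (h : psdLE P Q) (x : Fin n → ℝ) : x ⬝ᵥ P *ᵥ x ≤ x ⬝ᵥ Q *ᵥ x := by
  have := h.dotProduct_mulVec_nonneg x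
  rwa [star_trivial, sub_mulVec, dotProduct_sub, sub_nonneg] at this

lemma of_dotProduct_mulVec_le (hPQ : (Q - P).IsHermitian)
    (h : ∀ x, x ⬝ᵥ P *ᵥ x ≤ x ⬝ᵥ Q *ᵥ x) : psdLE P Q :=
  PosSemidef.of_dotProduct_mulVec_nonneg hPQ fun x ↦ by
    rw [star_trivial, sub_mulVec, dotProduct_sub, sub_nonneg]
    exact h x

lemma trans {R : Matrix (Fin n) (Fin n) ℝ} (h₁ : psdLE P Q) (h₂ : psdLE Q R) : psdLE P R := by
  rw [psdLE, ← sub_add_sub_cancel R Q P]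
  exact PosSemidef.add h₂ h₁

lemma add {P' Q : Matrix (Fin n) (Fin n) ℝ} (h : psdLE P Q) (h' : psdLE P' Q') :
    psdLE (P + P') (Q + Q') := by
  rw [psdLE, add_sub_add_comm]
  exact PosSemidef.add h h'

lemma smul (h : psdLE P Q) {c : ℝ} (hc : 0 ≤ c) : psdLE (c • P) (c • Q) := by
  rw [psdLE, ← smul_sub]
  exact PosSemidef.smul h hc

lemma posDef (hP : P.PosDef) (h : psdLE P Q) : Q.PosDef := by
  simpa using hP.add_posSemidef h

lemma inv (hP : P.PosDef) (h : psdLE P Q) : psdLE Q⁻¹ P⁻¹ := by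
  have hQ := h.posDef hP
  refine of_dotProduct_mulVec_le (hP.isHermitian.inv.sub hQ.isHermitian.inv) fun y ↦ ?_
  calc y ⬝ᵥ Q⁻¹ *ᵥ y = 2 * ((Q⁻¹ *ᵥ y) ⬝ᵥ y) - (Q⁻¹ *ᵥ y) ⬝ᵥ Q *ᵥ (Q⁻¹ *ᵥ y) :=
        (hQ.two_mul_dotProduct_inv_mulVec_sub y).symm
    _ ≤ 2 * ((Q⁻¹ *ᵥ y) ⬝ᵥ y) - (Q⁻¹ *ᵥ y) ⬝ᵥ P *ᵥ (Q⁻¹ *ᵥ y) := by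
        gcongr
        exact h.dotProduct_mulVec_le _
    _ ≤ y ⬝ᵥ P⁻¹ *ᵥ y := hP.two_mul_dotProduct_sub_le _ y

end psdLE

section Broyden

variable {ι : Type*} [Fintype ι] (A G : Matrix ι ι ℝ) (u : ι → ℝ)

noncomputable def dfpUpdate : Matrix ι ι ℝ :=
  G - (u ⬝ᵥ A *ᵥ u)⁻¹ • (A * vecMulVec u u * G + G * vecMulVec u u * A) +
    (((u ⬝ᵥ G *ᵥ u) / (u ⬝ᵥ A *ᵥ u) + 1) / (u ⬝ᵥ A *ᵥ u)) • (A * vecMulVec u u * A)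

noncomputable def bfgsUpdate : Matrix ι ι ℝ :=
  G - (u ⬝ᵥ G *ᵥ u)⁻¹ • (G * vecMulVec u u * G) + (u ⬝ᵥ A *ᵥ u)⁻¹ • (A * vecMulVec u u * A)

/-- The weight `φ_τ` of the DFP update in `Broyd_τ`. -/
noncomputable def broydWeight [DecidableEq ι] (τ : ℝ) : ℝ :=
  τ * ((u ⬝ᵥ A *ᵥ u) / (u ⬝ᵥ (A * G⁻¹ * A) *ᵥ u)) /
    (τ * ((u ⬝ᵥ A *ᵥ u) / (u ⬝ᵥ (A * G⁻¹ * A) *ᵥ u)) +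
      (1 - τ) * ((u ⬝ᵥ G *ᵥ u) / (u ⬝ᵥ A *ᵥ u)))

lemma broyd_of_ne_zero {n : ℕ} (τ : ℝ) (A G : Matrix (Fin n) (Fin n) ℝ) {u : Fin n → ℝ}
    (hu : u ≠ 0) :
    broyd τ A G u =
      broydWeight A G u τ • dfpUpdate A G u + (1 - broydWeight A G u τ) • bfgsUpdate A G u := by
  rw [broyd, if_neg hu]
  rfl

variable {A G u}

lemma broydWeight_mem_Icc [DecidableEq ι] (hA : A.PosDef) (hG : G.PosDef) {τ : ℝ}
    (hτ : τ ∈ Set.Icc (0 : ℝ) 1) : broydWeight A G u τ ∈ Set.Icc (0 : ℝ) 1 := by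
  have hAGA : 0 ≤ u ⬝ᵥ (A * G⁻¹ * A) *ᵥ u := by
    have := (hG.inv.posSemidef.conjTranspose_mul_mul_same A).dotProduct_mulVec_nonneg u
    rwa [hA.isHermitian.eq, star_trivial] at this
  have hA' : 0 ≤ u ⬝ᵥ A *ᵥ u := by simpa using hA.posSemidef.dotProduct_mulVec_nonneg u
  have hG' : 0 ≤ u ⬝ᵥ G *ᵥ u := by simpa using hG.posSemidef.dotProduct_mulVec_nonneg u
  have hdfp : 0 ≤ τ * ((u ⬝ᵥ A *ᵥ u) / (u ⬝ᵥ (A * G⁻¹ * A) *ᵥ u)) :=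
    mul_nonneg hτ.1 (div_nonneg hA' hAGA)
  have hbfgs : 0 ≤ (1 - τ) * ((u ⬝ᵥ G *ᵥ u) / (u ⬝ᵥ A *ᵥ u)) :=
    mul_nonneg (sub_nonneg.2 hτ.2) (div_nonneg hG' hA')
  exact ⟨div_nonneg hdfp (add_nonneg hdfp hbfgs), div_le_one_of_le₀ (by linarith) (by linarith)⟩

lemma dotProduct_mul_vecMulVec_mul_mulVec (M N : Matrix ι ι ℝ) (x : ι → ℝ) :
    x ⬝ᵥ (M * vecMulVec u u * N) *ᵥ x = (x ⬝ᵥ M *ᵥ u) * (u ⬝ᵥ N *ᵥ x) := by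
  rw [Matrix.mul_assoc, ← mulVec_mulVec, ← mulVec_mulVec, vecMulVec_mulVec, mulVec_smul,
    dotProduct_smul]
  simp

lemma conjTranspose_mul_vecMulVec_mul {M N : Matrix ι ι ℝ} (hM : M.IsHermitian)
    (hN : N.IsHermitian) : (M * vecMulVec u u * N)ᴴ = N * vecMulVec u u * M := by
  have hV : (vecMulVec u u).IsHermitian := by
    simpa using (posSemidef_vecMulVec_self_star u).isHermitian
  rw [conjTranspose_mul, conjTranspose_mul, hM.eq, hN.eq, hV.eq, Matrix.mul_assoc]

lemma isHermitian_dfpUpdate (hA : A.IsHermitian) (hG : G.IsHermitian) :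
    (dfpUpdate A G u).IsHermitian := by
  refine (hG.sub (.smul ?_ (.all _))).add (.smul ?_ (.all _))
  · rw [IsHermitian, conjTranspose_add, conjTranspose_mul_vecMulVec_mul hA hG,
      conjTranspose_mul_vecMulVec_mul hG hA, add_comm]
  · rw [IsHermitian, conjTranspose_mul_vecMulVec_mul hA hA]

lemma isHermitian_bfgsUpdate (hA : A.IsHermitian) (hG : G.IsHermitian) :
    (bfgsUpdate A G u).IsHermitian :=
  (hG.sub (.smul (conjTranspose_mul_vecMulVec_mul hG hG) (.all _))).add
    (.smul (conjTranspose_mul_vecMulVec_mul hA hA) (.all _))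

lemma dotProduct_dfpUpdate_mulVec (hA : A.IsHermitian) (hG : G.IsHermitian)
    (hu : u ⬝ᵥ A *ᵥ u ≠ 0) (x : ι → ℝ) :
    x ⬝ᵥ dfpUpdate A G u *ᵥ x =
      (x - ((x ⬝ᵥ A *ᵥ u) / (u ⬝ᵥ A *ᵥ u)) • u) ⬝ᵥ G *ᵥ
          (x - ((x ⬝ᵥ A *ᵥ u) / (u ⬝ᵥ A *ᵥ u)) • u) +
        (x ⬝ᵥ A *ᵥ u) ^ 2 / (u ⬝ᵥ A *ᵥ u) := by
  rw [hG.dotProduct_mulVec_sub_smul, dfpUpdate]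
  simp only [add_mulVec, sub_mulVec, smul_mulVec, dotProduct_add, dotProduct_sub,
    dotProduct_smul, dotProduct_mul_vecMulVec_mul_mulVec, hA.dotProduct_mulVec_comm u x,
    hG.dotProduct_mulVec_comm u x, smul_eq_mul]
  field_simp
  ring

lemma dotProduct_bfgsUpdate_mulVec (hA : A.IsHermitian) (hG : G.IsHermitian) (x : ι → ℝ) :
    x ⬝ᵥ bfgsUpdate A G u *ᵥ x =
      x ⬝ᵥ G *ᵥ x - (x ⬝ᵥ G *ᵥ u) ^ 2 / (u ⬝ᵥ G *ᵥ u) + (x ⬝ᵥ A *ᵥ u) ^ 2 / (u ⬝ᵥ A *ᵥ u) := by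
  rw [bfgsUpdate]
  simp only [add_mulVec, sub_mulVec, smul_mulVec, dotProduct_add, dotProduct_sub,
    dotProduct_smul, dotProduct_mul_vecMulVec_mul_mulVec, hA.dotProduct_mulVec_comm u x,
    hG.dotProduct_mulVec_comm u x, smul_eq_mul]
  ring

end Broyden

section BroydenBounds

variable {n : ℕ} {A G : Matrix (Fin n) (Fin n) ℝ} {u : Fin n → ℝ}

lemma psdLE.dotProduct_mulVec_le_sub_smul_add (h : psdLE A G) (hA : A.IsHermitian)
    (hu : 0 < u ⬝ᵥ A *ᵥ u) (x : Fin n → ℝ) (t : ℝ) :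
    x ⬝ᵥ A *ᵥ x ≤ (x - t • u) ⬝ᵥ G *ᵥ (x - t • u) + (x ⬝ᵥ A *ᵥ u) ^ 2 / (u ⬝ᵥ A *ᵥ u) := by
  linarith [hA.sub_div_le_dotProduct_mulVec_sub_smul hu x t, h.dotProduct_mulVec_le (x - t • u)]

lemma psdLE.dotProduct_mulVec_sub_div_smul_add_le {η : ℝ} (h : psdLE G (η • A)) (hη : 1 ≤ η)
    (hA : A.IsHermitian) (hu : 0 < u ⬝ᵥ A *ᵥ u) (x : Fin n → ℝ) :
    (x - ((x ⬝ᵥ A *ᵥ u) / (u ⬝ᵥ A *ᵥ u)) • u) ⬝ᵥ G *ᵥ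
        (x - ((x ⬝ᵥ A *ᵥ u) / (u ⬝ᵥ A *ᵥ u)) • u) + (x ⬝ᵥ A *ᵥ u) ^ 2 / (u ⬝ᵥ A *ᵥ u) ≤
      η * (x ⬝ᵥ A *ᵥ x) := by
  have hG := h.dotProduct_mulVec_le (x - ((x ⬝ᵥ A *ᵥ u) / (u ⬝ᵥ A *ᵥ u)) • u)
  rw [smul_mulVec, dotProduct_smul, smul_eq_mul, hA.dotProduct_mulVec_sub_div_smul hu.ne'] at hG
  nlinarith [mul_nonneg (sub_nonneg.2 hη) (div_nonneg (sq_nonneg (x ⬝ᵥ A *ᵥ u)) hu.le)]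

lemma psdLE_dfpUpdate (hA : A.PosDef) (h : psdLE A G) (hu : u ≠ 0) :
    psdLE A (dfpUpdate A G u) := by
  have hG := h.posDef hA
  have hAu : 0 < u ⬝ᵥ A *ᵥ u := by simpa using hA.dotProduct_mulVec_pos hu
  refine psdLE.of_dotProduct_mulVec_le
    ((isHermitian_dfpUpdate hA.isHermitian hG.isHermitian).sub hA.isHermitian) fun x ↦ ?_
  rw [dotProduct_dfpUpdate_mulVec hA.isHermitian hG.isHermitian hAu.ne']
  exact h.dotProduct_mulVec_le_sub_smul_add hA.isHermitian hAu x _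

lemma psdLE_bfgsUpdate (hA : A.PosDef) (h : psdLE A G) (hu : u ≠ 0) :
    psdLE A (bfgsUpdate A G u) := by
  have hG := h.posDef hA
  have hAu : 0 < u ⬝ᵥ A *ᵥ u := by simpa using hA.dotProduct_mulVec_pos hu
  have hGu : 0 < u ⬝ᵥ G *ᵥ u := by simpa using hG.dotProduct_mulVec_pos hu
  refine psdLE.of_dotProduct_mulVec_le
    ((isHermitian_bfgsUpdate hA.isHermitian hG.isHermitian).sub hA.isHermitian) fun x ↦ ?_
  rw [dotProduct_bfgsUpdate_mulVec hA.isHermitian hG.isHermitian,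
    ← hG.isHermitian.dotProduct_mulVec_sub_div_smul hGu.ne']
  exact h.dotProduct_mulVec_le_sub_smul_add hA.isHermitian hAu x _

lemma dfpUpdate_psdLE_smul {η : ℝ} (hA : A.PosDef) (hG : G.IsHermitian) (h : psdLE G (η • A))
    (hη : 1 ≤ η) (hu : u ≠ 0) : psdLE (dfpUpdate A G u) (η • A) := by
  have hAu : 0 < u ⬝ᵥ A *ᵥ u := by simpa using hA.dotProduct_mulVec_pos hu
  refine psdLE.of_dotProduct_mulVec_le
    ((hA.isHermitian.smul (.all η)).sub (isHermitian_dfpUpdate hA.isHermitian hG)) fun x ↦ ?_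
  rw [dotProduct_dfpUpdate_mulVec hA.isHermitian hG hAu.ne', smul_mulVec, dotProduct_smul,
    smul_eq_mul]
  exact h.dotProduct_mulVec_sub_div_smul_add_le hη hA.isHermitian hAu x

lemma bfgsUpdate_psdLE_smul {η : ℝ} (hA : A.PosDef) (hG : G.PosDef) (h : psdLE G (η • A))
    (hη : 1 ≤ η) (hu : u ≠ 0) : psdLE (bfgsUpdate A G u) (η • A) := by
  have hAu : 0 < u ⬝ᵥ A *ᵥ u := by simpa using hA.dotProduct_mulVec_pos hu
  have hGu : 0 < u ⬝ᵥ G *ᵥ u := by simpa using hG.dotProduct_mulVec_pos hu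
  refine psdLE.of_dotProduct_mulVec_le
    ((hA.isHermitian.smul (.all η)).sub (isHermitian_bfgsUpdate hA.isHermitian hG.isHermitian))
    fun x ↦ ?_
  rw [dotProduct_bfgsUpdate_mulVec hA.isHermitian hG.isHermitian, smul_mulVec, dotProduct_smul,
    smul_eq_mul]
  refine le_trans ?_ (h.dotProduct_mulVec_sub_div_smul_add_le hη hA.isHermitian hAu x)
  gcongr
  exact hG.isHermitian.sub_div_le_dotProduct_mulVec_sub_smul hGu x _

lemma psdLE_broyd (hA : A.PosDef) {τ : ℝ} (hτ : τ ∈ Set.Icc (0 : ℝ) 1) (h : psdLE A G)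
    (u : Fin n → ℝ) : psdLE A (broyd τ A G u) := by
  obtain rfl | hu := eq_or_ne u 0
  · simpa [broyd] using h
  obtain ⟨hφ0, hφ1⟩ := broydWeight_mem_Icc (u := u) hA (h.posDef hA) hτ
  have hcombo := ((psdLE_dfpUpdate hA h hu).smul hφ0).add
    ((psdLE_bfgsUpdate hA h hu).smul (sub_nonneg.2 hφ1))
  rwa [Convex.combo_self (add_sub_cancel _ _), ← broyd_of_ne_zero τ A G hu] at hcombo

lemma broyd_psdLE_smul {η : ℝ} (hA : A.PosDef) {τ : ℝ} (hτ : τ ∈ Set.Icc (0 : ℝ) 1)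
    (h₁ : psdLE A G) (h₂ : psdLE G (η • A)) (hη : 1 ≤ η) (u : Fin n → ℝ) :
    psdLE (broyd τ A G u) (η • A) := by
  obtain rfl | hu := eq_or_ne u 0
  · simpa [broyd] using h₂
  have hG := h₁.posDef hA
  obtain ⟨hφ0, hφ1⟩ := broydWeight_mem_Icc (u := u) hA hG hτ
  have hcombo := ((dfpUpdate_psdLE_smul hA hG.isHermitian h₂ hη hu).smul hφ0).add
    ((bfgsUpdate_psdLE_smul hA hG h₂ hη hu).smul (sub_nonneg.2 hφ1))
  rwa [Convex.combo_self (add_sub_cancel _ _), ← broyd_of_ne_zero τ A G hu] at hcombo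

end BroydenBounds

lemma le_of_smul_psdLE_smul {n : ℕ} [NeZero n] {B : Matrix (Fin n) (Fin n) ℝ} (hB : B.PosDef)
    {a b : ℝ} (h : psdLE (a • B) (b • B)) : a ≤ b := by
  have hone : (fun _ ↦ 1 : Fin n → ℝ) ≠ 0 := fun h0 ↦ one_ne_zero (congrFun h0 0)
  have hpos := hB.dotProduct_mulVec_pos hone
  have hle := h.dotProduct_mulVec_le fun _ ↦ 1
  simp only [star_trivial, smul_mulVec, dotProduct_smul, smul_eq_mul] at hpos hle
  exact le_of_mul_le_mul_right hle hpos

lemma psdLE.inv_smul_inv_psdLE_inv {n : ℕ} {A G : Matrix (Fin n) (Fin n) ℝ} {η : ℝ}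
    (h : psdLE G (η • A)) (hA : A.PosDef) (hG : G.PosDef) (hη : 0 < η) :
    psdLE (η⁻¹ • A⁻¹) G⁻¹ := by
  have hηA : (η • A)⁻¹ = η⁻¹ • A⁻¹ := inv_eq_left_inv <| by
    simp [smul_smul, hη.ne', nonsing_inv_mul _ (isUnit_iff_ne_zero.2 hA.det_pos.ne')]
  simpa [hηA] using h.inv hG

/-- `λ_k` of the scheme is `dualNorm A (∇f (x_k))`. -/
noncomputable def dualNorm {n : ℕ} (A : Matrix (Fin n) (Fin n) ℝ) (g : Fin n → ℝ) : ℝ :=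
  √(g ⬝ᵥ A⁻¹ *ᵥ g)

/-- With `K = A⁻¹ - G⁻¹` one has `0 ⪯ K ⪯ (1 - η⁻¹) A⁻¹` and `A⁻¹ r = K g` for the new residual
`r`, so Cauchy–Schwarz for `K` gives `(r ⬝ᵥ A⁻¹ r)² ≤ (1 - η⁻¹)² (r ⬝ᵥ A⁻¹ r) (g ⬝ᵥ A⁻¹ g)`. -/
theorem dualNorm_sub_mulVec_inv_mulVec_le {n : ℕ} {A G : Matrix (Fin n) (Fin n) ℝ} {η : ℝ}
    (hA : A.PosDef) (h₁ : psdLE A G) (h₂ : psdLE G (η • A)) (hη : 1 ≤ η) (g : Fin n → ℝ) :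
    dualNorm A (g - A *ᵥ (G⁻¹ *ᵥ g)) ≤ (1 - η⁻¹) * dualNorm A g := by
  have hG := h₁.posDef hA
  have hc : 0 ≤ 1 - η⁻¹ := sub_nonneg.2 (inv_le_one_of_one_le₀ hη)
  have hK : (A⁻¹ - G⁻¹).PosSemidef := h₁.inv hA
  have hKle : ∀ y, y ⬝ᵥ (A⁻¹ - G⁻¹) *ᵥ y ≤ (1 - η⁻¹) * (y ⬝ᵥ A⁻¹ *ᵥ y) := fun y ↦ by
    have := (h₂.inv_smul_inv_psdLE_inv hA hG (by positivity)).dotProduct_mulVec_le y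
    rw [smul_mulVec, dotProduct_smul, smul_eq_mul] at this
    rw [sub_mulVec, dotProduct_sub]
    linarith
  set r := g - A *ᵥ (G⁻¹ *ᵥ g)
  have hr : A⁻¹ *ᵥ r = (A⁻¹ - G⁻¹) *ᵥ g := by
    rw [mulVec_sub, mulVec_mulVec, nonsing_inv_mul _ (isUnit_iff_ne_zero.2 hA.det_pos.ne'),
      one_mulVec, sub_mulVec]
  have hr0 : 0 ≤ r ⬝ᵥ A⁻¹ *ᵥ r := by simpa using hA.inv.posSemidef.dotProduct_mulVec_nonneg r
  have hg0 : 0 ≤ g ⬝ᵥ A⁻¹ *ᵥ g := by simpa using hA.inv.posSemidef.dotProduct_mulVec_nonneg g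
  have hsq : (r ⬝ᵥ A⁻¹ *ᵥ r) ^ 2 ≤
      (1 - η⁻¹) ^ 2 * (r ⬝ᵥ A⁻¹ *ᵥ r) * (g ⬝ᵥ A⁻¹ *ᵥ g) := by
    calc (r ⬝ᵥ A⁻¹ *ᵥ r) ^ 2 = (r ⬝ᵥ (A⁻¹ - G⁻¹) *ᵥ g) ^ 2 := by rw [hr]
      _ ≤ (r ⬝ᵥ (A⁻¹ - G⁻¹) *ᵥ r) * (g ⬝ᵥ (A⁻¹ - G⁻¹) *ᵥ g) := hK.dotProduct_mulVec_sq_le r g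
      _ ≤ ((1 - η⁻¹) * (r ⬝ᵥ A⁻¹ *ᵥ r)) * ((1 - η⁻¹) * (g ⬝ᵥ A⁻¹ *ᵥ g)) :=
        mul_le_mul (hKle r) (hKle g) (by simpa using hK.dotProduct_mulVec_nonneg g)
          (mul_nonneg hc hr0)
      _ = (1 - η⁻¹) ^ 2 * (r ⬝ᵥ A⁻¹ *ᵥ r) * (g ⬝ᵥ A⁻¹ *ᵥ g) := by ring
  have hle : r ⬝ᵥ A⁻¹ *ᵥ r ≤ ((1 - η⁻¹) * dualNorm A g) ^ 2 := by
    rw [mul_pow, dualNorm, Real.sq_sqrt hg0]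
    nlinarith [mul_nonneg (sq_nonneg (1 - η⁻¹)) hg0]
  calc dualNorm A r ≤ √(((1 - η⁻¹) * dualNorm A g) ^ 2) := Real.sqrt_le_sqrt hle
    _ = (1 - η⁻¹) * dualNorm A g := Real.sqrt_sq (mul_nonneg hc (Real.sqrt_nonneg _))

theorem quad_scheme_linear_convergence {n : ℕ} (hn : 1 ≤ n)
    (B A : Matrix (Fin n) (Fin n) ℝ) (hB : B.PosDef) (hA : A.PosDef)
    (μ L : ℝ) (hμ : 0 < μ) (hL : 0 < L)
    (hμB : psdLE (μ • B) A) (hLB : psdLE A (L • B))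
    (b : Fin n → ℝ) (τ : ℕ → ℝ) (hτ : ∀ k, τ k ∈ Set.Icc (0 : ℝ) 1)
    (x : ℕ → Fin n → ℝ) (G : ℕ → Matrix (Fin n) (Fin n) ℝ)
    (hG0 : G 0 = L • B)
    (hx : ∀ k, x (k + 1) = x k - (G k)⁻¹.mulVec (A.mulVec (x k) - b))
    (hGrec : ∀ k, G (k + 1) = broyd (τ k) A (G k) (x (k + 1) - x k))
    (lam : ℕ → ℝ)
    (hlam : ∀ k, lam k =
      Real.sqrt ((A.mulVec (x k) - b) ⬝ᵥ A⁻¹.mulVec (A.mulVec (x k) - b)))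
    (k : ℕ) :
    psdLE A (G k) ∧ psdLE (G k) ((L / μ) • A) ∧
      lam k ≤ (1 - μ / L) ^ k * lam 0 := by
  have : NeZero n := ⟨by omega⟩
  have hμL : μ ≤ L := le_of_smul_psdLE_smul hB (hμB.trans hLB)
  have hη : 1 ≤ L / μ := (one_le_div hμ).2 hμL
  have hsandwich : ∀ k, psdLE A (G k) ∧ psdLE (G k) ((L / μ) • A) := by
    intro k
    induction k with
    | zero =>
      rw [hG0]
      refine ⟨hLB, ?_⟩
      simpa [smul_smul, div_mul_cancel₀ L hμ.ne'] using hμB.smul (div_pos hL hμ).le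
    | succ k ih =>
      rw [hGrec]
      exact ⟨psdLE_broyd hA (hτ k) ih.1 _, broyd_psdLE_smul hA (hτ k) ih.1 ih.2 hη _⟩
  have hstep : ∀ k, lam (k + 1) ≤ (1 - μ / L) * lam k := by
    intro k
    have hgrad : A *ᵥ x (k + 1) - b = (A *ᵥ x k - b) - A *ᵥ ((G k)⁻¹ *ᵥ (A *ᵥ x k - b)) := by
      rw [hx k, mulVec_sub]
      abel
    rw [hlam, hlam, hgrad, ← inv_div]
    exact dualNorm_sub_mulVec_inv_mulVec_le hA (hsandwich k).1 (hsandwich k).2 hη _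
  exact ⟨(hsandwich k).1, (hsandwich k).2,
    le_geom (sub_nonneg.2 ((div_le_one hL).2 hμL)) k fun k _ ↦ hstep k⟩
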